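/- Suppose the tuple {(n0,n1,n2), B, B_I} is admissible. Then for every x ∈ X, the boundary core is recovered from the fundamental state by x_c(a) = ∫_a^b B_Q(s) (Dx)(s) ds. -/

import Mathlib

open MeasureTheory Matrix Topology Filter

noncomputable section

namespace PIEpaper

/-- The Lebesgue measure restricted to the interval `[a,b]`. -/
def μab (a b : ℝ) : Measure ℝ := volume.restrict (Set.Icc a b)

/-- A matrix-valued function on `[a,b]` is essentially bounded (belongs to `L∞`). -/
def EssBddMat {ι κ : Type*} (a b : ℝ) (M : ℝ → Matrix ι κ ℝ) : Prop :=
  Measurable (fun s i j => M s i j) ∧ ∃ C : ℝ, ∀ᵐ s ∂(μab a b), ∀ i j, |M s i j| ≤ C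

/-- A matrix-valued function on `[a,b]` is (entrywise) square integrable. -/
def SqIntMat {ι κ : Type*} (a b : ℝ) (M : ℝ → Matrix ι κ ℝ) : Prop :=
  Measurable (fun s i j => M s i j) ∧ ∀ i j, MemLp (fun s => M s i j) 2 (μab a b)

/-- A matrix-valued kernel `R : [a,b]² → ℝ^{ι×κ}` is separable if `R(s,θ) = F(s)ᵀ G(θ)`
for essentially bounded `F, G`. -/
def SepMat {ι κ : Type*} (a b : ℝ) (R : ℝ → ℝ → Matrix ι κ ℝ) : Prop :=
  ∃ (r : ℕ) (F : ℝ → Matrix (Fin r) ι ℝ) (G : ℝ → Matrix (Fin r) κ ℝ),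
    EssBddMat a b F ∧ EssBddMat a b G ∧
    ∀ s ∈ Set.Icc a b, ∀ θ ∈ Set.Icc a b, R s θ = (F s)ᵀ * G θ

variable (a b : ℝ) (n0 n1 n2 : ℕ)

/-- Index type for the PDE state blocks `(x0, x1, x2)`, and likewise for the
fundamental state `Dx = (x0, ∂ₛx1, ∂ₛ²x2)`; it has `n_x = n0+n1+n2` elements. -/
abbrev Ix := Fin n0 ⊕ (Fin n1 ⊕ Fin n2)

/-- Index type for the boundary core `x_c = (x1, x2, ∂ₛx2)`; it has `n_S = n1+2n2` elements. -/
abbrev Ic := Fin n1 ⊕ (Fin n2 ⊕ Fin n2)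

/-- Index type for the first two block rows `(n1- and n2-sized)`. -/
abbrev I12 := Fin n1 ⊕ Fin n2

/-- Index type for the full derivative vector
`x_D = (x0, x1, x2, ∂ₛx1, ∂ₛx2, ∂ₛ²x2)` (with `n_x + n_S` elements), organized into the
fundamental-state block `(x0, ∂ₛx1, ∂ₛ²x2)` (left) and the core block `(x1, x2, ∂ₛx2)` (right). -/
abbrev ID := Ix n0 n1 n2 ⊕ Ic n1 n2

/-- An element of `W^n = W_0^{n0} × W_1^{n1} × W_2^{n2}` on `[a,b]`, encoded through its
components together with their (weak) derivatives: `x1 ∈ W_1` and `x2 ∈ W_2` are identified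
with their absolutely continuous representatives, i.e. they satisfy the fundamental theorem
of calculus with square-integrable derivatives `dx1 = ∂ₛx1`, `dx2 = ∂ₛx2`, `ddx2 = ∂ₛ²x2`. -/
structure State where
  x0 : ℝ → Fin n0 → ℝ
  x1 : ℝ → Fin n1 → ℝ
  dx1 : ℝ → Fin n1 → ℝ
  x2 : ℝ → Fin n2 → ℝ
  dx2 : ℝ → Fin n2 → ℝ
  ddx2 : ℝ → Fin n2 → ℝ
  memLp_x0 : MemLp x0 2 (μab a b)
  memLp_dx1 : MemLp dx1 2 (μab a b)
  memLp_dx2 : MemLp dx2 2 (μab a b)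
  memLp_ddx2 : MemLp ddx2 2 (μab a b)
  ftc_x1 : ∀ s ∈ Set.Icc a b, ∀ i, x1 s i = x1 a i + ∫ θ in a..s, dx1 θ i
  ftc_x2 : ∀ s ∈ Set.Icc a b, ∀ i, x2 s i = x2 a i + ∫ θ in a..s, dx2 θ i
  ftc_dx2 : ∀ s ∈ Set.Icc a b, ∀ i, dx2 s i = dx2 a i + ∫ θ in a..s, ddx2 θ i

variable {a b n0 n1 n2}

/-- The PDE state `x = (x0, x1, x2)` as an `ℝ^{n_x}`-valued function. -/
def xfun (x : State a b n0 n1 n2) (s : ℝ) : Ix n0 n1 n2 → ℝ :=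
  Sum.elim (x.x0 s) (Sum.elim (x.x1 s) (x.x2 s))

/-- The fundamental state `Dx = (x0, ∂ₛx1, ∂ₛ²x2)` as an `ℝ^{n_x}`-valued function. -/
def Dx (x : State a b n0 n1 n2) (s : ℝ) : Ix n0 n1 n2 → ℝ :=
  Sum.elim (x.x0 s) (Sum.elim (x.dx1 s) (x.ddx2 s))

/-- The boundary core `x_c = (x1, x2, ∂ₛx2)` as an `ℝ^{n_S}`-valued function. -/
def xc (x : State a b n0 n1 n2) (s : ℝ) : Ic n1 n2 → ℝ :=
  Sum.elim (x.x1 s) (Sum.elim (x.x2 s) (x.dx2 s))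

/-- The full derivative vector `x_D = (x0, x1, x2, ∂ₛx1, ∂ₛx2, ∂ₛ²x2)`. -/
def xD (x : State a b n0 n1 n2) (s : ℝ) : ID n0 n1 n2 → ℝ :=
  Sum.elim (Dx x s) (xc x s)

/-- The boundary-value vector `x_b = (x_c(a), x_c(b)) ∈ ℝ^{2 n_S}`. -/
def xb (x : State a b n0 n1 n2) : (Ic n1 n2 ⊕ Ic n1 n2) → ℝ :=
  Sum.elim (xc x a) (xc x b)

variable (a b n0 n1 n2)

/-- `T(η) = [[I,0,0],[0,I,ηI],[0,0,I]] ∈ ℝ^{n_S × n_S}`. -/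
def Tmat (η : ℝ) : Matrix (Ic n1 n2) (Ic n1 n2) ℝ :=
  Matrix.of fun i j =>
    match i, j with
    | .inl i, .inl j => if i = j then (1:ℝ) else 0
    | .inr (.inl i), .inr (.inl j) => if i = j then (1:ℝ) else 0
    | .inr (.inl i), .inr (.inr j) => if i = j then η else 0
    | .inr (.inr i), .inr (.inr j) => if i = j then (1:ℝ) else 0
    | _, _ => 0

/-- `Q(η) = [[0,I_{n1},0],[0,0,ηI_{n2}],[0,0,I_{n2}]] ∈ ℝ^{n_S × n_x}`. -/
def Qmat (η : ℝ) : Matrix (Ic n1 n2) (Ix n0 n1 n2) ℝ :=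
  Matrix.of fun i j =>
    match i, j with
    | .inl i, .inr (.inl j) => if i = j then (1:ℝ) else 0
    | .inr (.inl i), .inr (.inr j) => if i = j then η else 0
    | .inr (.inr i), .inr (.inr j) => if i = j then (1:ℝ) else 0
    | _, _ => 0

/-- Embedding of the first two block rows into the `x_c` index. -/
def emb12 : I12 n1 n2 → Ic n1 n2 := Sum.elim Sum.inl (fun k => Sum.inr (Sum.inl k))

/-- `T1(η)`: the first two block rows of `T(η)`. -/
def T1mat (η : ℝ) : Matrix (I12 n1 n2) (Ic n1 n2) ℝ :=
  Matrix.of fun i j => Tmat n1 n2 η (emb12 n1 n2 i) j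

/-- `Q1(η)`: the first two block rows of `Q(η)`. -/
def Q1mat (η : ℝ) : Matrix (I12 n1 n2) (Ix n0 n1 n2) ℝ :=
  Matrix.of fun i j => Qmat n0 n1 n2 η (emb12 n1 n2 i) j

/-- `U1 ∈ ℝ^{(n_x+n_S) × n_x}`: the 0-1 matrix placing `(v0,v1,v2)` into the
`x0`, `∂ₛx1` and `∂ₛ²x2` blocks of the `x_D` ordering. -/
def U1 : Matrix (ID n0 n1 n2) (Ix n0 n1 n2) ℝ :=
  Matrix.of fun i j =>
    match i with
    | .inl i' => if i' = j then (1:ℝ) else 0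
    | .inr _ => 0

/-- `U2 ∈ ℝ^{(n_x+n_S) × n_S}`: the 0-1 matrix placing `(w1,w2,w3)` into the
`x1`, `x2` and `∂ₛx2` blocks of the `x_D` ordering. -/
def U2 : Matrix (ID n0 n1 n2) (Ic n1 n2) ℝ :=
  Matrix.of fun i j =>
    match i with
    | .inl _ => (0:ℝ)
    | .inr i' => if i' = j then 1 else 0

/-- The stacked matrix `[T(0); T(b-a)] ∈ ℝ^{2n_S × n_S}`. -/
def Tstack : Matrix (Ic n1 n2 ⊕ Ic n1 n2) (Ic n1 n2) ℝ :=
  Matrix.of fun i j =>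
    match i with
    | .inl i' => Tmat n1 n2 0 i' j
    | .inr i' => Tmat n1 n2 (b - a) i' j

/-- The stacked matrix `[0_{n_S×n_x}; Q(η)] ∈ ℝ^{2n_S × n_x}`. -/
def Qstack (η : ℝ) : Matrix (Ic n1 n2 ⊕ Ic n1 n2) (Ix n0 n1 n2) ℝ :=
  Matrix.of fun i j =>
    match i with
    | .inl _ => (0:ℝ)
    | .inr i' => Qmat n0 n1 n2 η i' j

variable (B : Matrix (Ic n1 n2) (Ic n1 n2 ⊕ Ic n1 n2) ℝ)
variable (B_I : ℝ → Matrix (Ic n1 n2) (ID n0 n1 n2) ℝ)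

/-- `B_T = B [T(0); T(b−a)] − ∫_a^b B_I(s) U2 T(s−a) ds`. -/
def BT : Matrix (Ic n1 n2) (Ic n1 n2) ℝ :=
  B * Tstack a b n1 n2 -
    Matrix.of fun i j => ∫ s in a..b, (B_I s * U2 n0 n1 n2 * Tmat n1 n2 (s - a)) i j

/-- Admissibility of the boundary conditions: `B_T` is invertible. -/
def Admissible : Prop := IsUnit (BT a b n0 n1 n2 B B_I).det

/-- `B_Q(s) = B_T⁻¹ ( B_I(s) U1 − B [0; Q(b−s)] + ∫_s^b B_I(θ) U2 Q(θ−s) dθ )`. -/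
def BQ (s : ℝ) : Matrix (Ic n1 n2) (Ix n0 n1 n2) ℝ :=
  (BT a b n0 n1 n2 B B_I)⁻¹ *
    (B_I s * U1 n0 n1 n2 - B * Qstack n0 n1 n2 (b - s) +
      Matrix.of fun i j => ∫ θ in s..b, (B_I θ * U2 n0 n1 n2 * Qmat n0 n1 n2 (θ - s)) i j)

/-- The boundary condition `B x_b = ∫_a^b B_I(s) x_D(s) ds` defining the set `X`;
  together with the regularity encoded in `State` this says `x ∈ X`. -/
def BCholds (x : State a b n0 n1 n2) : Prop :=
  ∀ i, B.mulVec (xb x) i = ∫ s in a..b, (B_I s).mulVec (xD x s) i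

/-- `G0 = diag(I_{n0}, 0_{n1+n2})`. -/
def G0 : Matrix (Ix n0 n1 n2) (Ix n0 n1 n2) ℝ :=
  Matrix.of fun i j =>
    match i, j with
    | .inl i', .inl j' => if i' = j' then (1:ℝ) else 0
    | _, _ => 0

/-- `G2(s,θ) = [0_{n0×n_x}; T1(s−a) B_Q(θ)]`. -/
def G2 (s θ : ℝ) : Matrix (Ix n0 n1 n2) (Ix n0 n1 n2) ℝ :=
  Matrix.of fun i j =>
    match i with
    | .inl _ => (0:ℝ)
    | .inr i' => (T1mat n1 n2 (s - a) * BQ a b n0 n1 n2 B B_I θ) i' j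

/-- `G1(s,θ) = [0_{n0×n_x}; Q1(s−θ)] + G2(s,θ)`. -/
def G1 (s θ : ℝ) : Matrix (Ix n0 n1 n2) (Ix n0 n1 n2) ℝ :=
  (Matrix.of fun i j =>
    match i with
    | .inl _ => (0:ℝ)
    | .inr i' => Q1mat n0 n1 n2 (s - θ) i' j) + G2 a b n0 n1 n2 B B_I s θ

/-- The PI operator `𝒯`, acting on (representatives of) functions in `L2^{n_x}`:
`(𝒯v)(s) = G0 v(s) + ∫_a^s G1(s,θ) v(θ) dθ + ∫_s^b G2(s,θ) v(θ) dθ`. -/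
def Tfun (v : ℝ → Ix n0 n1 n2 → ℝ) (s : ℝ) : Ix n0 n1 n2 → ℝ := fun i =>
  (G0 n0 n1 n2).mulVec (v s) i
  + (∫ θ in a..s, (G1 a b n0 n1 n2 B B_I s θ).mulVec (v θ) i)
  + (∫ θ in s..b, (G2 a b n0 n1 n2 B B_I s θ).mulVec (v θ) i)

/-- `R_{D,2}(s,θ) = U2 T(s−a) B_Q(θ)`. -/
def RD2 (s θ : ℝ) : Matrix (ID n0 n1 n2) (Ix n0 n1 n2) ℝ :=
  U2 n0 n1 n2 * Tmat n1 n2 (s - a) * BQ a b n0 n1 n2 B B_I θ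

/-- `R_{D,1}(s,θ) = R_{D,2}(s,θ) + U2 Q(s−θ)`. -/
def RD1 (s θ : ℝ) : Matrix (ID n0 n1 n2) (Ix n0 n1 n2) ℝ :=
  RD2 a b n0 n1 n2 B B_I s θ + U2 n0 n1 n2 * Qmat n0 n1 n2 (s - θ)

end PIEpaper

namespace PIEpaper
variable (a b : ℝ) (n0 n1 n2 : ℕ)
variable (B : Matrix (Ic n1 n2) (Ic n1 n2 ⊕ Ic n1 n2) ℝ)
variable (B_I : ℝ → Matrix (Ic n1 n2) (ID n0 n1 n2) ℝ)

/-- The `L2[a,b]` norm of an `ℝ^ι`-valued function. -/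
def L2norm {ι : Type*} [Fintype ι] (f : ℝ → ι → ℝ) : ℝ :=
  Real.sqrt (∫ s in a..b, ∑ i, (f s i) ^ 2)

/-- The `L2[a,b]` inner product of two `ℝ^ι`-valued functions. -/
def L2inner {ι : Type*} [Fintype ι] (f g : ℝ → ι → ℝ) : ℝ :=
  ∫ s in a..b, ∑ i, f s i * g s i

variable (A0 : ℝ → Matrix (Ix n0 n1 n2) (ID n0 n1 n2) ℝ)
variable (A1 A2 : ℝ → ℝ → Matrix (Ix n0 n1 n2) (ID n0 n1 n2) ℝ)

/-- `Â0(s) = A0(s) U1`. -/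
def Ahat0 (s : ℝ) : Matrix (Ix n0 n1 n2) (Ix n0 n1 n2) ℝ := A0 s * U1 n0 n1 n2

/-- `Â1(s,θ)`. -/
def Ahat1 (s θ : ℝ) : Matrix (Ix n0 n1 n2) (Ix n0 n1 n2) ℝ :=
  A0 s * RD1 a b n0 n1 n2 B B_I s θ + A1 s θ * U1 n0 n1 n2
  + (Matrix.of fun i j => ∫ β in a..θ, (A1 s β * RD2 a b n0 n1 n2 B B_I β θ) i j)
  + (Matrix.of fun i j => ∫ β in θ..s, (A1 s β * RD1 a b n0 n1 n2 B B_I β θ) i j)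
  + (Matrix.of fun i j => ∫ β in s..b, (A2 s β * RD1 a b n0 n1 n2 B B_I β θ) i j)

/-- `Â2(s,θ)`. -/
def Ahat2 (s θ : ℝ) : Matrix (Ix n0 n1 n2) (Ix n0 n1 n2) ℝ :=
  A0 s * RD2 a b n0 n1 n2 B B_I s θ + A2 s θ * U1 n0 n1 n2
  + (Matrix.of fun i j => ∫ β in a..s, (A1 s β * RD2 a b n0 n1 n2 B B_I β θ) i j)
  + (Matrix.of fun i j => ∫ β in s..θ, (A2 s β * RD2 a b n0 n1 n2 B B_I β θ) i j)
  + (Matrix.of fun i j => ∫ β in θ..b, (A2 s β * RD1 a b n0 n1 n2 B B_I β θ) i j)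

/-- The PI operator `𝒜`:
`(𝒜v)(s) = Â0(s) v(s) + ∫_a^s Â1(s,θ) v(θ) dθ + ∫_s^b Â2(s,θ) v(θ) dθ`. -/
def Afun (v : ℝ → Ix n0 n1 n2 → ℝ) (s : ℝ) : Ix n0 n1 n2 → ℝ := fun i =>
  (Ahat0 n0 n1 n2 A0 s).mulVec (v s) i
  + (∫ θ in a..s, (Ahat1 a b n0 n1 n2 B B_I A0 A1 A2 s θ).mulVec (v θ) i)
  + (∫ θ in s..b, (Ahat2 a b n0 n1 n2 B B_I A0 A1 A2 s θ).mulVec (v θ) i)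

/-- The right-hand side of the PDE dynamics:
`A0(s) x_D(s) + ∫_a^s A1(s,θ) x_D(θ) dθ + ∫_s^b A2(s,θ) x_D(θ) dθ`. -/
def PDErhs (x : State a b n0 n1 n2) (s : ℝ) : Ix n0 n1 n2 → ℝ := fun i =>
  (A0 s).mulVec (xD x s) i
  + (∫ θ in a..s, (A1 s θ).mulVec (xD x θ) i)
  + (∫ θ in s..b, (A2 s θ).mulVec (xD x θ) i)

/-- `t ↦ u(t)` is Fréchet differentiable at `t` with respect to the `L2[a,b]` norm,
with derivative `g`. -/
def HasL2DerivAt (u : ℝ → ℝ → Ix n0 n1 n2 → ℝ) (g : ℝ → Ix n0 n1 n2 → ℝ) (t : ℝ) : Prop :=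
  Tendsto (fun h : ℝ =>
      L2norm a b (fun s i => (u (t + h) s i - u t s i) / h - g s i))
    (nhdsWithin 0 {0}ᶜ) (nhds 0)

/-- `t ↦ u(t)` is Fréchet differentiable at `t` with respect to the `𝒯`-norm
`v ↦ ‖𝒯v‖_{L2}`, with derivative `g`. -/
def HasTDerivAt (u : ℝ → ℝ → Ix n0 n1 n2 → ℝ) (g : ℝ → Ix n0 n1 n2 → ℝ) (t : ℝ) : Prop :=
  Tendsto (fun h : ℝ =>
      L2norm a b (Tfun a b n0 n1 n2 B B_I
        (fun s i => (u (t + h) s i - u t s i) / h - g s i)))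
    (nhdsWithin 0 {0}ᶜ) (nhds 0)

/-- `x : [0,∞) → W^n` satisfies the PDE defined by `{(n0,n1,n2), B, B_I, A0, A1, A2}` with
initial condition `x⁰ ∈ X`: `x(t) ∈ X` for all `t ≥ 0`, `x(0) = x⁰`, and for almost every
`t ≥ 0`, `x` is Fréchet differentiable (w.r.t. the `L2` norm) at `t` with derivative `ẋ(t)`
satisfying the dynamics for almost every `s ∈ [a,b]`. -/
def SatisfiesPDE (x : ℝ → State a b n0 n1 n2) (x0 : State a b n0 n1 n2) : Prop :=
  (∀ t, 0 ≤ t → BCholds a b n0 n1 n2 B B_I (x t)) ∧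
  (∀ᵐ s ∂(μab a b), ∀ i, xfun (x 0) s i = xfun x0 s i) ∧
  (∀ᵐ t ∂(volume.restrict (Set.Ici (0:ℝ))), ∃ g : ℝ → Ix n0 n1 n2 → ℝ,
    HasL2DerivAt a b n0 n1 n2 (fun τ => xfun (x τ)) g t ∧
    ∀ᵐ s ∂(μab a b), ∀ i, g s i = PDErhs a b n0 n1 n2 A0 A1 A2 (x t) s i)

/-- `x_f : [0,∞) → L2^{n_x}` satisfies the PIE defined by `{𝒯, 𝒜}` with initial condition
`x_f⁰ ∈ L2^{n_x}`: `x_f(t) ∈ L2` for all `t ≥ 0`, `x_f(0) = x_f⁰`, and for almost every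
`t ≥ 0`, `x_f` is Fréchet differentiable w.r.t. the `𝒯`-norm at `t` with derivative
`ẋ_f(t)` satisfying `𝒯 ẋ_f(t) = 𝒜 x_f(t)` for almost every `s ∈ [a,b]`. -/
def SatisfiesPIE (xf : ℝ → ℝ → Ix n0 n1 n2 → ℝ) (xf0 : ℝ → Ix n0 n1 n2 → ℝ) : Prop :=
  (∀ t, 0 ≤ t → MemLp (xf t) 2 (μab a b)) ∧
  (∀ᵐ s ∂(μab a b), ∀ i, xf 0 s i = xf0 s i) ∧
  (∀ᵐ t ∂(volume.restrict (Set.Ici (0:ℝ))), ∃ g : ℝ → Ix n0 n1 n2 → ℝ,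
    HasTDerivAt a b n0 n1 n2 B B_I xf g t ∧
    ∀ᵐ s ∂(μab a b), ∀ i,
      Tfun a b n0 n1 n2 B B_I g s i = Afun a b n0 n1 n2 B B_I A0 A1 A2 (xf t) s i)

/-- The `X`-norm `‖x‖_X = (Σ_{i=0}^2 ‖∂ₛ^i x_i‖²_{L2})^{1/2}`. -/
def normX (x : State a b n0 n1 n2) : ℝ :=
  Real.sqrt ((L2norm a b x.x0) ^ 2 + (L2norm a b x.dx1) ^ 2 + (L2norm a b x.ddx2) ^ 2)

/-- The Sobolev-type norm `‖x‖_H = Σ_{i=0}^2 Σ_{j=0}^i ‖∂ₛ^j x_i‖_{L2}`. -/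
def normH (x : State a b n0 n1 n2) : ℝ :=
  L2norm a b x.x0 + (L2norm a b x.x1 + L2norm a b x.dx1)
    + (L2norm a b x.x2 + L2norm a b x.dx2 + L2norm a b x.ddx2)

/-- The PDE defined by `{(n0,n1,n2), B, B_I, A0, A1, A2}` is exponentially stable. -/
def ExpStablePDE : Prop :=
  ∃ M > (0:ℝ), ∃ α > (0:ℝ), ∀ x0 : State a b n0 n1 n2, BCholds a b n0 n1 n2 B B_I x0 →
    ∀ x : ℝ → State a b n0 n1 n2, SatisfiesPDE a b n0 n1 n2 B B_I A0 A1 A2 x x0 →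
      ∀ t, 0 ≤ t → normH a b n0 n1 n2 (x t) ≤ M * normH a b n0 n1 n2 x0 * Real.exp (-α * t)

/-- The PIE defined by `{𝒯, 𝒜}` is exponentially stable. -/
def ExpStablePIE : Prop :=
  ∃ M > (0:ℝ), ∃ α > (0:ℝ), ∀ xf0 : ℝ → Ix n0 n1 n2 → ℝ, MemLp xf0 2 (μab a b) →
    ∀ xf : ℝ → ℝ → Ix n0 n1 n2 → ℝ,
      SatisfiesPIE a b n0 n1 n2 B B_I A0 A1 A2 xf xf0 →
      ∀ t, 0 ≤ t → L2norm a b (xf t) ≤ M * L2norm a b xf0 * Real.exp (-α * t)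

/-- The `X`-inner product `⟨u,w⟩_X = Σ_{i=0}^2 ⟨∂ₛ^i u_i, ∂ₛ^i w_i⟩_{L2}` of two
`ℝ^{n_x}`-valued functions, where the spatial derivatives of the `W_1`- and `W_2`-blocks
are taken classically (they exist a.e. for elements of `X`). -/
def XinnerF (u w : ℝ → Ix n0 n1 n2 → ℝ) : ℝ :=
  (∫ s in a..b, ∑ i : Fin n0, u s (Sum.inl i) * w s (Sum.inl i))
  + (∫ s in a..b, ∑ i : Fin n1,
      deriv (fun t => u t (Sum.inr (Sum.inl i))) s *
      deriv (fun t => w t (Sum.inr (Sum.inl i))) s)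
  + (∫ s in a..b, ∑ i : Fin n2,
      deriv (deriv (fun t => u t (Sum.inr (Sum.inr i)))) s *
      deriv (deriv (fun t => w t (Sum.inr (Sum.inr i)))) s)

/-- The `X`-distance between two elements of `X`, induced by the `X`-norm:
`‖u − v‖_X = ‖Du − Dv‖_{L2}`. -/
def distX (u v : State a b n0 n1 n2) : ℝ :=
  Real.sqrt (∫ s in a..b, ∑ i, (Dx u s i - Dx v s i) ^ 2)

end PIEpaper

/-!
Taylor's formula with integral remainder gives `x_c(s) = T(s-a) x_c(a) + ∫_a^s Q(s-θ) Dx(θ) dθ`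
on `[a,b]`. Substituting it into both sides of the boundary condition `B x_b = ∫_a^b B_I x_D`
and exchanging the order of integration over the triangle `a ≤ θ ≤ s ≤ b` turns the condition
into `B_T x_c(a) = ∫_a^b B_T B_Q(s) Dx(s) ds`, and admissibility lets one cancel `B_T`.
-/

namespace PIEpaper

open Set Function intervalIntegral

section Integrability

variable {a b : ℝ}

instance isFiniteMeasure_μab : IsFiniteMeasure (μab a b) := by unfold μab; infer_instance

theorem intervalIntegral_eq_integral_μab (hab : a ≤ b) (f : ℝ → ℝ) :
    ∫ s in a..b, f s = ∫ s, f s ∂μab a b := by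
  rw [integral_of_le hab, μab, integral_Icc_eq_integral_Ioc]

theorem ae_μab_of_forall_mem {P : ℝ → Prop} (h : ∀ s ∈ Icc a b, P s) : ∀ᵐ s ∂μab a b, P s :=
  ae_restrict_of_forall_mem measurableSet_Icc h

theorem intervalIntegrable_of_integrable_μab_of_mem {f : ℝ → ℝ} (hf : Integrable f (μab a b))
    {c d : ℝ} (hc : c ∈ Icc a b) (hd : d ∈ Icc a b) : IntervalIntegrable f volume c d := by
  rw [intervalIntegrable_iff]
  exact IntegrableOn.mono_set hf (uIoc_subset_uIcc.trans (uIcc_subset_Icc hc hd))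

theorem intervalIntegrable_of_integrable_μab (hab : a ≤ b) {f : ℝ → ℝ}
    (hf : Integrable f (μab a b)) : IntervalIntegrable f volume a b :=
  intervalIntegrable_of_integrable_μab_of_mem hf ⟨le_rfl, hab⟩ ⟨hab, le_rfl⟩

theorem integrable_mul_continuous_μab {f g : ℝ → ℝ} (hf : Integrable f (μab a b))
    (hg : Continuous g) : Integrable (fun s => f s * g s) (μab a b) :=
  IntegrableOn.mul_continuousOn hf hg.continuousOn isCompact_Icc

theorem integrable_continuous_mul_μab {f g : ℝ → ℝ} (hf : Continuous f)
    (hg : Integrable g (μab a b)) : Integrable (fun s => f s * g s) (μab a b) :=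
  IntegrableOn.continuousOn_mul hf.continuousOn hg isCompact_Icc

theorem integrable_mul_kernel_prod {f g : ℝ → ℝ} {k : ℝ → ℝ → ℝ}
    (hf : Integrable f (μab a b)) (hg : Integrable g (μab a b)) (hk : Continuous (uncurry k)) :
    Integrable (fun p : ℝ × ℝ => f p.1 * k p.1 p.2 * g p.2) ((μab a b).prod (μab a b)) := by
  obtain ⟨C, hC⟩ := (isCompact_Icc.prod isCompact_Icc).exists_bound_of_continuousOn
    hk.continuousOn (s := Icc a b ×ˢ Icc a b)
  have hbound : ∀ᵐ p ∂(μab a b).prod (μab a b), ‖uncurry k p‖ ≤ C := by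
    rw [μab, Measure.prod_restrict]
    exact ae_restrict_of_forall_mem (measurableSet_Icc.prod measurableSet_Icc) hC
  refine ((hf.mul_prod hg).bdd_mul hk.aestronglyMeasurable hbound).congr (.of_forall ?_)
  intro p
  simp only [uncurry]
  ring

end Integrability

section Triangle

variable {a b : ℝ} {H : ℝ → ℝ → ℝ}

/-- Both iterated integrals of `H` over the triangle `a ≤ θ ≤ s ≤ b` are integrals of this
function over the square `[a,b]²`, which is how Fubini's theorem exchanges them. -/
def triangleExt (H : ℝ → ℝ → ℝ) : ℝ × ℝ → ℝ := {p | p.2 ≤ p.1}.indicator (uncurry H)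

theorem intervalIntegral_eq_integral_triangleExt_left {s : ℝ} (hs : s ∈ Icc a b) :
    ∫ θ in a..s, H s θ = ∫ θ, triangleExt H (s, θ) ∂μab a b := by
  have hind : (fun θ => triangleExt H (s, θ)) = (Iic s).indicator (H s) := by
    ext θ
    by_cases hθ : θ ≤ s <;> simp [triangleExt, hθ]
  have hset : Iic s ∩ Icc a b = Icc a s := by
    ext θ
    simp only [mem_inter_iff, mem_Iic, mem_Icc]
    exact ⟨fun h => ⟨h.2.1, h.1⟩, fun h => ⟨h.2, h.1, h.2.trans hs.2⟩⟩
  rw [hind, MeasureTheory.integral_indicator measurableSet_Iic, μab,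
    Measure.restrict_restrict measurableSet_Iic, hset, integral_Icc_eq_integral_Ioc,
    integral_of_le hs.1]

theorem intervalIntegral_eq_integral_triangleExt_right {θ : ℝ} (hθ : θ ∈ Icc a b) :
    ∫ s in θ..b, H s θ = ∫ s, triangleExt H (s, θ) ∂μab a b := by
  have hind : (fun s => triangleExt H (s, θ)) = (Ici θ).indicator (fun s => H s θ) := by
    ext s
    by_cases hs : θ ≤ s <;> simp [triangleExt, hs]
  have hset : Ici θ ∩ Icc a b = Icc θ b := by
    ext s
    simp only [mem_inter_iff, mem_Ici, mem_Icc]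
    exact ⟨fun h => ⟨h.1, h.2.2⟩, fun h => ⟨h.1, hθ.1.trans h.1, h.2⟩⟩
  rw [hind, MeasureTheory.integral_indicator measurableSet_Ici, μab,
    Measure.restrict_restrict measurableSet_Ici, hset, integral_Icc_eq_integral_Ioc,
    integral_of_le hθ.2]

theorem integrable_triangleExt (hH : Integrable (uncurry H) ((μab a b).prod (μab a b))) :
    Integrable (triangleExt H) ((μab a b).prod (μab a b)) :=
  hH.indicator (measurableSet_le measurable_snd measurable_fst)

theorem integral_integral_triangle_swap (hH : Integrable (uncurry H) ((μab a b).prod (μab a b)))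
    (hab : a ≤ b) :
    ∫ s in a..b, ∫ θ in a..s, H s θ = ∫ θ in a..b, ∫ s in θ..b, H s θ := by
  rw [intervalIntegral_eq_integral_μab hab, intervalIntegral_eq_integral_μab hab,
    integral_congr_ae (ae_μab_of_forall_mem fun s hs =>
      intervalIntegral_eq_integral_triangleExt_left hs),
    integral_congr_ae (ae_μab_of_forall_mem fun θ hθ =>
      intervalIntegral_eq_integral_triangleExt_right (H := H) hθ)]
  exact integral_integral_swap (integrable_triangleExt hH)

theorem intervalIntegrable_integral_triangle_left
    (hH : Integrable (uncurry H) ((μab a b).prod (μab a b))) (hab : a ≤ b) :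
    IntervalIntegrable (fun s => ∫ θ in a..s, H s θ) volume a b := by
  refine intervalIntegrable_of_integrable_μab hab ?_
  refine (integrable_triangleExt hH).integral_prod_left.congr ?_
  exact ae_μab_of_forall_mem fun s hs => (intervalIntegral_eq_integral_triangleExt_left hs).symm

theorem intervalIntegrable_integral_triangle_right
    (hH : Integrable (uncurry H) ((μab a b).prod (μab a b))) (hab : a ≤ b) :
    IntervalIntegrable (fun θ => ∫ s in θ..b, H s θ) volume a b := by
  refine intervalIntegrable_of_integrable_μab hab ?_
  refine (integrable_triangleExt hH).integral_prod_right.congr ?_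
  exact ae_μab_of_forall_mem fun θ hθ => (intervalIntegral_eq_integral_triangleExt_right hθ).symm

end Triangle

theorem integral_integral_eq_integral_sub_mul {a s : ℝ} (has : a ≤ s) {g : ℝ → ℝ}
    (hg : Integrable g (μab a s)) :
    ∫ θ in a..s, ∫ η in a..θ, g η = ∫ η in a..s, (s - η) * g η := by
  have hH : Integrable (uncurry fun (_ η : ℝ) => g η) ((μab a s).prod (μab a s)) := by
    show Integrable (fun q : ℝ × ℝ => g q.2) _
    simpa using (integrable_const (1 : ℝ)).mul_prod hg
  rw [integral_integral_triangle_swap hH has]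
  simp

section MatrixIntegrals

variable {m n : Type*} [Fintype n] {a b : ℝ}

theorem mulVec_intervalIntegral (A : Matrix m n ℝ) {v : ℝ → n → ℝ}
    (hv : ∀ j, IntervalIntegrable (fun s => v s j) volume a b) (i : m) :
    (A *ᵥ fun j => ∫ s in a..b, v s j) i = ∫ s in a..b, (A *ᵥ v s) i := by
  simp only [mulVec, dotProduct]
  rw [integral_finsetSum fun j _ => (hv j).const_mul (A i j)]
  simp_rw [intervalIntegral.integral_const_mul]

theorem of_intervalIntegral_mulVec {M : ℝ → Matrix m n ℝ}
    (hM : ∀ i j, IntervalIntegrable (fun s => M s i j) volume a b) (w : n → ℝ) (i : m) :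
    ((Matrix.of fun i j => ∫ s in a..b, M s i j) *ᵥ w) i = ∫ s in a..b, (M s *ᵥ w) i := by
  simp only [mulVec, dotProduct, of_apply]
  rw [integral_finsetSum fun j _ => (hM i j).mul_const (w j)]
  simp_rw [intervalIntegral.integral_mul_const]

theorem integrable_mulVec_apply_of_memLp {F : ℝ → Matrix m n ℝ} {v : ℝ → n → ℝ}
    (hF : ∀ i j, MemLp (fun s => F s i j) 2 (μab a b))
    (hv : ∀ j, MemLp (fun s => v s j) 2 (μab a b)) (i : m) :
    Integrable (fun s => (F s *ᵥ v s) i) (μab a b) :=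
  integrable_finsetSum _ fun j _ => (hF i j).integrable_mul (hv j)

theorem integrable_mulVec_apply_of_continuous_left {K : ℝ → Matrix m n ℝ} (hK : Continuous K)
    {v : ℝ → n → ℝ} (hv : ∀ j, Integrable (fun s => v s j) (μab a b)) (i : m) :
    Integrable (fun s => (K s *ᵥ v s) i) (μab a b) :=
  integrable_finsetSum _ fun j _ => integrable_continuous_mul_μab (hK.matrix_elem i j) (hv j)

theorem integrable_mulVec_apply_of_continuous_right {F : ℝ → Matrix m n ℝ}
    (hF : ∀ i j, Integrable (fun s => F s i j) (μab a b)) {w : ℝ → n → ℝ} (hw : Continuous w)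
    (i : m) : Integrable (fun s => (F s *ᵥ w s) i) (μab a b) :=
  integrable_finsetSum _ fun j _ =>
    integrable_mul_continuous_μab (hF i j) ((continuous_apply j).comp hw)

theorem integrable_mul_apply_of_continuous_right {p : Type*} {F : ℝ → Matrix m n ℝ}
    (hF : ∀ i j, Integrable (fun s => F s i j) (μab a b)) {G : ℝ → Matrix n p ℝ} (hG : Continuous G)
    (i : m) (k : p) : Integrable (fun s => (F s * G s) i k) (μab a b) :=
  integrable_finsetSum _ fun j _ => integrable_mul_continuous_μab (hF i j) (hG.matrix_elem j k)

variable {p : Type*} [Fintype p] {F : ℝ → Matrix m n ℝ} {K : ℝ → ℝ → Matrix n p ℝ}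
  {v : ℝ → p → ℝ}

theorem integrable_mul_mulVec_apply_prod (hF : ∀ i j, Integrable (fun s => F s i j) (μab a b))
    (hK : Continuous (uncurry K)) (hv : ∀ k, Integrable (fun θ => v θ k) (μab a b)) (i : m) :
    Integrable (uncurry fun s θ => ((F s * K s θ) *ᵥ v θ) i) ((μab a b).prod (μab a b)) := by
  have hsum : (uncurry fun s θ => ((F s * K s θ) *ᵥ v θ) i)
      = fun q : ℝ × ℝ => ∑ k, ∑ j, F q.1 i j * K q.1 q.2 j k * v q.2 k := by
    ext q
    simp [uncurry, mulVec, dotProduct, mul_apply, Finset.sum_mul]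
  rw [hsum]
  exact integrable_finsetSum _ fun k _ => integrable_finsetSum _ fun j _ =>
    integrable_mul_kernel_prod (k := fun s θ => K s θ j k) (hF i j) (hv k) (hK.matrix_elem j k)

theorem mulVec_integral_mulVec_eq_integral (hK : Continuous (uncurry K))
    (hv : ∀ k, Integrable (fun θ => v θ k) (μab a b)) {s : ℝ} (hs : s ∈ Icc a b) (i : m) :
    (F s *ᵥ fun j => ∫ θ in a..s, (K s θ *ᵥ v θ) j) i
      = ∫ θ in a..s, ((F s * K s θ) *ᵥ v θ) i := by
  have hKs : Continuous fun θ => K s θ := hK.comp (continuous_const.prodMk continuous_id)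
  rw [mulVec_intervalIntegral _ fun j => intervalIntegrable_of_integrable_μab_of_mem
    (integrable_mulVec_apply_of_continuous_left hKs hv j) ⟨le_rfl, hs.1.trans hs.2⟩ hs]
  simp_rw [mulVec_mulVec]

theorem of_integral_mul_mulVec_eq_integral (hF : ∀ i j, Integrable (fun s => F s i j) (μab a b))
    (hK : Continuous (uncurry K)) {θ : ℝ} (hθ : θ ∈ Icc a b) (i : m) :
    ((Matrix.of fun i k => ∫ s in θ..b, (F s * K s θ) i k) *ᵥ v θ) i
      = ∫ s in θ..b, ((F s * K s θ) *ᵥ v θ) i := by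
  have hKθ : Continuous fun s => K s θ := hK.comp (continuous_id.prodMk continuous_const)
  exact of_intervalIntegral_mulVec (fun i k => intervalIntegrable_of_integrable_μab_of_mem
    (integrable_mul_apply_of_continuous_right hF hKθ i k) hθ ⟨hθ.1.trans hθ.2, le_rfl⟩) _ i

theorem integral_mulVec_triangle_swap (hab : a ≤ b)
    (hF : ∀ i j, Integrable (fun s => F s i j) (μab a b)) (hK : Continuous (uncurry K))
    (hv : ∀ k, Integrable (fun θ => v θ k) (μab a b)) (i : m) :
    ∫ s in a..b, (F s *ᵥ fun j => ∫ θ in a..s, (K s θ *ᵥ v θ) j) i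
      = ∫ θ in a..b, ((Matrix.of fun i k => ∫ s in θ..b, (F s * K s θ) i k) *ᵥ v θ) i :=
  calc _ = ∫ s in a..b, ∫ θ in a..s, ((F s * K s θ) *ᵥ v θ) i :=
        integral_congr fun _ hs =>
          mulVec_integral_mulVec_eq_integral hK hv (uIcc_of_le hab ▸ hs) i
    _ = ∫ θ in a..b, ∫ s in θ..b, ((F s * K s θ) *ᵥ v θ) i :=
        integral_integral_triangle_swap (integrable_mul_mulVec_apply_prod hF hK hv i) hab
    _ = _ := integral_congr fun _ hθ =>
        (of_integral_mul_mulVec_eq_integral hF hK (uIcc_of_le hab ▸ hθ) i).symm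

theorem intervalIntegrable_mulVec_triangle_left (hab : a ≤ b)
    (hF : ∀ i j, Integrable (fun s => F s i j) (μab a b)) (hK : Continuous (uncurry K))
    (hv : ∀ k, Integrable (fun θ => v θ k) (μab a b)) (i : m) :
    IntervalIntegrable (fun s => (F s *ᵥ fun j => ∫ θ in a..s, (K s θ *ᵥ v θ) j) i)
      volume a b :=
  (intervalIntegrable_integral_triangle_left (integrable_mul_mulVec_apply_prod hF hK hv i)
    hab).congr fun _ hs =>
      (mulVec_integral_mulVec_eq_integral hK hv (Ioc_subset_Icc_self (uIoc_of_le hab ▸ hs)) i).symm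

theorem intervalIntegrable_mulVec_triangle_right (hab : a ≤ b)
    (hF : ∀ i j, Integrable (fun s => F s i j) (μab a b)) (hK : Continuous (uncurry K))
    (hv : ∀ k, Integrable (fun θ => v θ k) (μab a b)) (i : m) :
    IntervalIntegrable
      (fun θ => ((Matrix.of fun i k => ∫ s in θ..b, (F s * K s θ) i k) *ᵥ v θ) i) volume a b :=
  (intervalIntegrable_integral_triangle_right (integrable_mul_mulVec_apply_prod hF hK hv i)
    hab).congr fun _ hθ =>
      (of_integral_mul_mulVec_eq_integral hF hK (Ioc_subset_Icc_self (uIoc_of_le hab ▸ hθ)) i).symm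

end MatrixIntegrals

section BoundaryCore

variable {a b : ℝ} {n0 n1 n2 : ℕ}

theorem Tmat_mulVec (η : ℝ) (v : Ic n1 n2 → ℝ) :
    Tmat n1 n2 η *ᵥ v = Sum.elim (fun i => v (.inl i))
      (Sum.elim (fun i => v (.inr (.inl i)) + η * v (.inr (.inr i)))
        (fun i => v (.inr (.inr i)))) := by
  ext (i | i | i) <;>
    simp [mulVec, dotProduct, Fintype.sum_sum_type, Tmat, ite_mul, Finset.sum_ite_eq]

theorem Qmat_mulVec (η : ℝ) (w : Ix n0 n1 n2 → ℝ) :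
    Qmat n0 n1 n2 η *ᵥ w = Sum.elim (fun i => w (.inr (.inl i)))
      (Sum.elim (fun i => η * w (.inr (.inr i))) (fun i => w (.inr (.inr i)))) := by
  ext (i | i | i) <;>
    simp [mulVec, dotProduct, Fintype.sum_sum_type, Qmat, ite_mul, Finset.sum_ite_eq]

theorem continuous_Tmat : Continuous (Tmat n1 n2) :=
  continuous_matrix fun i j => by
    rcases i with i | i | i <;> rcases j with j | j | j <;> simp only [Tmat, of_apply] <;>
      (try split_ifs) <;> fun_prop

theorem continuous_Qmat : Continuous (Qmat n0 n1 n2) :=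
  continuous_matrix fun i j => by
    rcases i with i | i | i <;> rcases j with j | j | j <;> simp only [Qmat, of_apply] <;>
      (try split_ifs) <;> fun_prop

theorem continuous_Qstack : Continuous (Qstack n0 n1 n2) :=
  continuous_matrix fun i j => by
    rcases i with i | i
    · exact continuous_const
    · exact continuous_Qmat.matrix_elem i j

theorem mul_U1_apply (M : Matrix (Ic n1 n2) (ID n0 n1 n2) ℝ) (i : Ic n1 n2) (k : Ix n0 n1 n2) :
    (M * U1 n0 n1 n2) i k = M i (.inl k) := by
  simp [mul_apply, U1, Fintype.sum_sum_type]

theorem mul_U2_apply (M : Matrix (Ic n1 n2) (ID n0 n1 n2) ℝ) (i j : Ic n1 n2) :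
    (M * U2 n0 n1 n2) i j = M i (.inr j) := by
  simp [mul_apply, U2, Fintype.sum_sum_type]

theorem U1_mulVec_add_U2_mulVec (v : Ix n0 n1 n2 → ℝ) (w : Ic n1 n2 → ℝ) :
    U1 n0 n1 n2 *ᵥ v + U2 n0 n1 n2 *ᵥ w = Sum.elim v w := by
  ext (i | i) <;> simp [mulVec, dotProduct, U1, U2]

theorem Tstack_mulVec (v : Ic n1 n2 → ℝ) :
    Tstack a b n1 n2 *ᵥ v = Sum.elim (Tmat n1 n2 0 *ᵥ v) (Tmat n1 n2 (b - a) *ᵥ v) := by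
  ext (i | i) <;> rfl

theorem Qstack_mulVec (η : ℝ) (w : Ix n0 n1 n2 → ℝ) :
    Qstack n0 n1 n2 η *ᵥ w = Sum.elim (0 : Ic n1 n2 → ℝ) (Qmat n0 n1 n2 η *ᵥ w) := by
  ext (i | i)
  · simp [Qstack, mulVec, dotProduct]
  · rfl

theorem memLp_Dx_apply (x : State a b n0 n1 n2) (k : Ix n0 n1 n2) :
    MemLp (fun s => Dx x s k) 2 (μab a b) := by
  rcases k with k | k | k
  · exact memLp_pi_iff.1 x.memLp_x0 k
  · exact memLp_pi_iff.1 x.memLp_dx1 k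
  · exact memLp_pi_iff.1 x.memLp_ddx2 k

theorem xc_eq_taylor (x : State a b n0 n1 n2) {s : ℝ} (hs : s ∈ Icc a b) :
    xc x s = Tmat n1 n2 (s - a) *ᵥ xc x a
      + fun j => ∫ θ in a..s, (Qmat n0 n1 n2 (s - θ) *ᵥ Dx x θ) j := by
  ext (j | j | j) <;> simp only [Pi.add_apply, Tmat_mulVec, Qmat_mulVec, xc, Dx, Sum.elim_inl,
    Sum.elim_inr]
  · exact x.ftc_x1 s hs j
  · have hdd : Integrable (fun η => x.ddx2 η j) (μab a s) :=
      ((memLp_pi_iff.1 x.memLp_ddx2 j).integrable one_le_two).mono_measure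
        (Measure.restrict_mono (Icc_subset_Icc_right hs.2) le_rfl)
    have hdx2 : ∫ θ in a..s, x.dx2 θ j = ∫ θ in a..s, (x.dx2 a j + ∫ η in a..θ, x.ddx2 η j) :=
      integral_congr fun θ hθ =>
        x.ftc_dx2 θ (Icc_subset_Icc_right hs.2 (uIcc_of_le hs.1 ▸ hθ)) j
    have hprim : IntervalIntegrable (fun θ => ∫ η in a..θ, x.ddx2 η j) volume a s :=
      (continuousOn_primitive_interval (uIcc_of_le hs.1 ▸ hdd)).intervalIntegrable
    rw [x.ftc_x2 s hs j, hdx2, integral_add intervalIntegrable_const hprim,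
      integral_integral_eq_integral_sub_mul hs.1 hdd]
    simp only [intervalIntegral.integral_const, smul_eq_mul]
    ring
  · exact x.ftc_dx2 s hs j

theorem Tmat_zero : Tmat n1 n2 0 = 1 := by
  ext (i | i | i) (j | j | j) <;> simp [Tmat, one_apply]

theorem xb_eq (hab : a ≤ b) (x : State a b n0 n1 n2) :
    xb x = Tstack a b n1 n2 *ᵥ xc x a
      + fun r => ∫ θ in a..b, (Qstack n0 n1 n2 (b - θ) *ᵥ Dx x θ) r := by
  ext (r | r)
  · simp [xb, Tstack_mulVec, Qstack_mulVec, Tmat_zero]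
  · simpa [xb, Tstack_mulVec, Qstack_mulVec] using congrFun (xc_eq_taylor x ⟨hab, le_rfl⟩) r

theorem mulVec_xD_eq (M : Matrix (Ic n1 n2) (ID n0 n1 n2) ℝ) (x : State a b n0 n1 n2) {s : ℝ}
    (hs : s ∈ Icc a b) :
    M *ᵥ xD x s = (M * U1 n0 n1 n2) *ᵥ Dx x s + (M * U2 n0 n1 n2 * Tmat n1 n2 (s - a)) *ᵥ xc x a
      + (M * U2 n0 n1 n2) *ᵥ fun j => ∫ θ in a..s, (Qmat n0 n1 n2 (s - θ) *ᵥ Dx x θ) j := by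
  rw [show xD x s = Sum.elim (Dx x s) (xc x s) from rfl, ← U1_mulVec_add_U2_mulVec,
    xc_eq_taylor x hs]
  simp only [mulVec_add, mulVec_mulVec, add_assoc, Matrix.mul_assoc]

/-- `B_T B_Q(s)`, the bracket in the definition of `B_Q`. -/
def BTBQ (b : ℝ) (B : Matrix (Ic n1 n2) (Ic n1 n2 ⊕ Ic n1 n2) ℝ)
    (B_I : ℝ → Matrix (Ic n1 n2) (ID n0 n1 n2) ℝ) (s : ℝ) : Matrix (Ic n1 n2) (Ix n0 n1 n2) ℝ :=
  B_I s * U1 n0 n1 n2 - B * Qstack n0 n1 n2 (b - s) +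
    Matrix.of fun i j => ∫ θ in s..b, (B_I θ * U2 n0 n1 n2 * Qmat n0 n1 n2 (θ - s)) i j

variable {B : Matrix (Ic n1 n2) (Ic n1 n2 ⊕ Ic n1 n2) ℝ}
  {B_I : ℝ → Matrix (Ic n1 n2) (ID n0 n1 n2) ℝ}

theorem integrable_Dx_apply (x : State a b n0 n1 n2) (k : Ix n0 n1 n2) :
    Integrable (fun s => Dx x s k) (μab a b) :=
  (memLp_Dx_apply x k).integrable one_le_two

theorem integrable_mul_U2_apply (hBI : ∀ i d, MemLp (fun s => B_I s i d) 2 (μab a b))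
    (i j : Ic n1 n2) : Integrable (fun s => (B_I s * U2 n0 n1 n2) i j) (μab a b) := by
  simpa only [mul_U2_apply] using (hBI i (.inr j)).integrable one_le_two

theorem continuous_Qmat_sub : Continuous (uncurry fun s θ : ℝ => Qmat n0 n1 n2 (s - θ)) :=
  continuous_Qmat.comp (continuous_fst.sub continuous_snd)

theorem intervalIntegrable_mul_U1_mulVec_Dx (hab : a ≤ b)
    (hBI : ∀ i d, MemLp (fun s => B_I s i d) 2 (μab a b)) (x : State a b n0 n1 n2)
    (i : Ic n1 n2) :
    IntervalIntegrable (fun s => ((B_I s * U1 n0 n1 n2) *ᵥ Dx x s) i) volume a b := by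
  refine intervalIntegrable_of_integrable_μab hab ?_
  exact integrable_mulVec_apply_of_memLp (fun i k => by simpa only [mul_U1_apply] using hBI i _)
    (memLp_Dx_apply x) i

theorem intervalIntegrable_mulVec_Dx_of_continuous {m : Type*} (hab : a ≤ b)
    (x : State a b n0 n1 n2) {K : ℝ → Matrix m (Ix n0 n1 n2) ℝ} (hK : Continuous K) (i : m) :
    IntervalIntegrable (fun s => (K s *ᵥ Dx x s) i) volume a b :=
  intervalIntegrable_of_integrable_μab hab
    (integrable_mulVec_apply_of_continuous_left hK (integrable_Dx_apply x) i)

theorem continuous_Qstack_sub : Continuous fun s => Qstack n0 n1 n2 (b - s) :=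
  continuous_Qstack.comp (continuous_const.sub continuous_id)

theorem intervalIntegrable_BTBQ_mulVec_Dx (hab : a ≤ b)
    (hBI : ∀ i d, MemLp (fun s => B_I s i d) 2 (μab a b)) (x : State a b n0 n1 n2)
    (i : Ic n1 n2) :
    IntervalIntegrable (fun s => (BTBQ b B B_I s *ᵥ Dx x s) i) volume a b := by
  simp only [BTBQ, add_mulVec, sub_mulVec, Pi.add_apply, Pi.sub_apply]
  exact ((intervalIntegrable_mul_U1_mulVec_Dx hab hBI x i).sub
    (intervalIntegrable_mulVec_Dx_of_continuous hab x
      (continuous_const.matrix_mul continuous_Qstack_sub) i)).add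
    (intervalIntegrable_mulVec_triangle_right hab (integrable_mul_U2_apply hBI) continuous_Qmat_sub
      (integrable_Dx_apply x) i)

theorem integrable_mul_U2_mul_Tmat_apply (hBI : ∀ i d, MemLp (fun s => B_I s i d) 2 (μab a b))
    (i j : Ic n1 n2) :
    Integrable (fun s => (B_I s * U2 n0 n1 n2 * Tmat n1 n2 (s - a)) i j) (μab a b) :=
  integrable_mul_apply_of_continuous_right (integrable_mul_U2_apply hBI)
    (continuous_Tmat.comp (continuous_id.sub continuous_const)) i j

theorem BT_mulVec_apply (hab : a ≤ b) (hBI : ∀ i d, MemLp (fun s => B_I s i d) 2 (μab a b))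
    (v : Ic n1 n2 → ℝ) (i : Ic n1 n2) :
    (BT a b n0 n1 n2 B B_I *ᵥ v) i = ((B * Tstack a b n1 n2) *ᵥ v) i
      - ∫ s in a..b, ((B_I s * U2 n0 n1 n2 * Tmat n1 n2 (s - a)) *ᵥ v) i := by
  rw [BT, sub_mulVec, Pi.sub_apply, of_intervalIntegral_mulVec
    fun i j => intervalIntegrable_of_integrable_μab hab (integrable_mul_U2_mul_Tmat_apply hBI i j)]

theorem mulVec_xb (hab : a ≤ b) (x : State a b n0 n1 n2) (i : Ic n1 n2) :
    (B *ᵥ xb x) i = ((B * Tstack a b n1 n2) *ᵥ xc x a) i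
      + ∫ s in a..b, ((B * Qstack n0 n1 n2 (b - s)) *ᵥ Dx x s) i := by
  rw [xb_eq hab, mulVec_add, Pi.add_apply, mulVec_mulVec, mulVec_intervalIntegral B
    (intervalIntegrable_mulVec_Dx_of_continuous hab x continuous_Qstack_sub)]
  simp_rw [mulVec_mulVec]

/-- The right-hand side of the boundary condition, after exchanging the order of integration in
its `x_c`-part. -/
theorem integral_mulVec_xD (hab : a ≤ b) (hBI : ∀ i d, MemLp (fun s => B_I s i d) 2 (μab a b))
    (x : State a b n0 n1 n2) (i : Ic n1 n2) :
    ∫ s in a..b, (B_I s *ᵥ xD x s) i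
      = (∫ s in a..b, ((B_I s * U1 n0 n1 n2) *ᵥ Dx x s) i)
        + (∫ s in a..b, ((B_I s * U2 n0 n1 n2 * Tmat n1 n2 (s - a)) *ᵥ xc x a) i)
        + ∫ θ in a..b, ((Matrix.of fun i k => ∫ s in θ..b,
            (B_I s * U2 n0 n1 n2 * Qmat n0 n1 n2 (s - θ)) i k) *ᵥ Dx x θ) i := by
  have hU2 := integrable_mul_U2_apply hBI
  have hD := integrable_Dx_apply x
  have ht1 := intervalIntegrable_mul_U1_mulVec_Dx hab hBI x i
  have ht2 := intervalIntegrable_of_integrable_μab hab (integrable_mulVec_apply_of_continuous_right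
    (integrable_mul_U2_mul_Tmat_apply hBI) continuous_const (w := fun _ => xc x a) i)
  rw [← integral_mulVec_triangle_swap hab hU2 continuous_Qmat_sub hD i, ← integral_add ht1 ht2,
    ← integral_add (ht1.add ht2)
      (intervalIntegrable_mulVec_triangle_left hab hU2 continuous_Qmat_sub hD i)]
  exact integral_congr fun s hs => by rw [mulVec_xD_eq _ x (uIcc_of_le hab ▸ hs)]; rfl

theorem integral_BTBQ_mulVec_Dx (hab : a ≤ b)
    (hBI : ∀ i d, MemLp (fun s => B_I s i d) 2 (μab a b)) (x : State a b n0 n1 n2)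
    (i : Ic n1 n2) :
    ∫ s in a..b, (BTBQ b B B_I s *ᵥ Dx x s) i
      = (∫ s in a..b, ((B_I s * U1 n0 n1 n2) *ᵥ Dx x s) i)
        - (∫ s in a..b, ((B * Qstack n0 n1 n2 (b - s)) *ᵥ Dx x s) i)
        + ∫ θ in a..b, ((Matrix.of fun i k => ∫ s in θ..b,
            (B_I s * U2 n0 n1 n2 * Qmat n0 n1 n2 (s - θ)) i k) *ᵥ Dx x θ) i := by
  have ht1 := intervalIntegrable_mul_U1_mulVec_Dx hab hBI x i
  have hq := intervalIntegrable_mulVec_Dx_of_continuous hab x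
    (continuous_const.matrix_mul (continuous_Qstack_sub (b := b))) (K := fun s => B * _) i
  rw [← integral_sub ht1 hq, ← integral_add (ht1.sub hq) (intervalIntegrable_mulVec_triangle_right
    hab (integrable_mul_U2_apply hBI) continuous_Qmat_sub (integrable_Dx_apply x) i)]
  simp only [BTBQ, add_mulVec, sub_mulVec, Pi.add_apply, Pi.sub_apply]

theorem BT_mulVec_xc (hab : a ≤ b) (hBI : ∀ i d, MemLp (fun s => B_I s i d) 2 (μab a b))
    (x : State a b n0 n1 n2) (hx : BCholds a b n0 n1 n2 B B_I x) (i : Ic n1 n2) :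
    (BT a b n0 n1 n2 B B_I *ᵥ xc x a) i = ∫ s in a..b, (BTBQ b B B_I s *ᵥ Dx x s) i := by
  rw [BT_mulVec_apply hab hBI, integral_BTBQ_mulVec_Dx hab hBI x]
  linarith [hx i, mulVec_xb (B := B) hab x i, integral_mulVec_xD hab hBI x i]

end BoundaryCore

/-- If `{(n0,n1,n2), B, B_I}` is admissible, then for every `x ∈ X`
the boundary core is recovered from the fundamental state:
`x_c(a) = ∫_a^b B_Q(s) (Dx)(s) ds`. -/
theorem boundary_core_recovery (a b : ℝ) (hab : a < b) (n0 n1 n2 : ℕ)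
    (B : Matrix (Ic n1 n2) (Ic n1 n2 ⊕ Ic n1 n2) ℝ)
    (B_I : ℝ → Matrix (Ic n1 n2) (ID n0 n1 n2) ℝ)
    (hBI : SqIntMat a b B_I)
    (hadm : Admissible a b n0 n1 n2 B B_I)
    (x : State a b n0 n1 n2) (hx : BCholds a b n0 n1 n2 B B_I x) :
    ∀ i, xc x a i = ∫ s in a..b, (BQ a b n0 n1 n2 B B_I s).mulVec (Dx x s) i := by
  intro i
  have hBTxc : BT a b n0 n1 n2 B B_I *ᵥ xc x a
      = fun k => ∫ s in a..b, (BTBQ b B B_I s *ᵥ Dx x s) k :=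
    funext (BT_mulVec_xc hab.le hBI.2 x hx)
  calc xc x a i = ((BT a b n0 n1 n2 B B_I)⁻¹ *ᵥ (BT a b n0 n1 n2 B B_I *ᵥ xc x a)) i := by
        rw [mulVec_mulVec, nonsing_inv_mul _ hadm, one_mulVec]
    _ = ∫ s in a..b, ((BT a b n0 n1 n2 B B_I)⁻¹ *ᵥ (BTBQ b B B_I s *ᵥ Dx x s)) i := by
        rw [hBTxc, mulVec_intervalIntegral _ (intervalIntegrable_BTBQ_mulVec_Dx hab.le hBI.2 x)]
    _ = ∫ s in a..b, (BQ a b n0 n1 n2 B B_I s *ᵥ Dx x s) i := by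
        simp only [BQ, BTBQ, mulVec_mulVec]

end PIEpaper
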